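/- Let d = 3 and define the local rule f : Fin 3 → Fin 3 → Fin 3 → Fin 3 by f x y z = z if y = 0, and f x y z = −z (mod 3, i.e. 0↦0, 1↦2, 2↦1) if y ∈ {1,2} (the 3-state CA rule 120120210120120210120120210). Then for every n ≥ 3, the global map F of the n-cell periodic-boundary CA is bijective. -/

import Mathlib

def f10 : Fin 3 → Fin 3 → Fin 3 → Fin 3 := fun _ y z => if y = 0 then z else -z

/-! Cell `i` of the image is `± c (i + 1)`, the sign being `-` exactly when `c i ≠ 0`.
Negation fixes `0`, so `F c (i - 1) = 0 ↔ c i = 0`: the image itself tells which sign was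
used at cell `i`, and undoing it recovers `c (i + 1)` from `F c (i - 1)` and `F c i`. -/

def negUnlessZero {α : Type*} [Zero α] [Neg α] [DecidableEq α] (y z : α) : α :=
  if y = 0 then z else -z

section

variable {α : Type*} [AddGroup α] [DecidableEq α]

theorem negUnlessZero_eq_zero_iff (y z : α) : negUnlessZero y z = 0 ↔ z = 0 := by
  unfold negUnlessZero
  split_ifs <;> simp

theorem negUnlessZero_congr_left {y y' : α} (h : y = 0 ↔ y' = 0) :
    negUnlessZero y = negUnlessZero y' := by
  funext z
  simp only [negUnlessZero, h]

theorem negUnlessZero_negUnlessZero (y z : α) : negUnlessZero y (negUnlessZero y z) = z := by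
  unfold negUnlessZero
  split_ifs <;> simp

end

section

variable {α ι : Type*} [AddGroup α] [DecidableEq α] [AddGroup ι] (s : ι)

def negUnlessZeroCA (c : ι → α) (i : ι) : α :=
  negUnlessZero (c i) (c (i + s))

def negUnlessZeroCAInv (b : ι → α) (j : ι) : α :=
  negUnlessZero (b (j - s - s)) (b (j - s))

theorem negUnlessZeroCAInv_leftInverse :
    Function.LeftInverse (negUnlessZeroCAInv s) (negUnlessZeroCA s : (ι → α) → ι → α) := by
  intro c
  funext j
  have hsign : negUnlessZero (negUnlessZeroCA s c (j - s - s)) = negUnlessZero (c (j - s)) :=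
    negUnlessZero_congr_left <| by
      rw [negUnlessZeroCA, negUnlessZero_eq_zero_iff, sub_add_cancel]
  rw [negUnlessZeroCAInv, hsign, negUnlessZeroCA, sub_add_cancel, negUnlessZero_negUnlessZero]

theorem negUnlessZeroCAInv_rightInverse :
    Function.RightInverse (negUnlessZeroCAInv s) (negUnlessZeroCA s : (ι → α) → ι → α) := by
  intro b
  funext i
  have hsign : negUnlessZero (negUnlessZeroCAInv s b i) = negUnlessZero (b (i - s)) :=
    negUnlessZero_congr_left <| by rw [negUnlessZeroCAInv, negUnlessZero_eq_zero_iff]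
  rw [negUnlessZeroCA, hsign, negUnlessZeroCAInv, add_sub_cancel_right,
    negUnlessZero_negUnlessZero]

theorem negUnlessZeroCA_bijective :
    Function.Bijective (negUnlessZeroCA s : (ι → α) → ι → α) :=
  Function.bijective_iff_has_inverse.mpr
    ⟨_, negUnlessZeroCAInv_leftInverse s, negUnlessZeroCAInv_rightInverse s⟩

end

theorem stmt_10_general (n : ℕ) :
    Function.Bijective
      (fun (c : ZMod n → Fin 3) (i : ZMod n) => f10 (c (i - 1)) (c i) (c (i + 1))) :=
  negUnlessZeroCA_bijective 1

theorem stmt_10 (n : ℕ) (hn : 3 ≤ n) :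
    Function.Bijective
      (fun (c : ZMod n → Fin 3) (i : ZMod n) => f10 (c (i - 1)) (c i) (c (i + 1))) :=
  stmt_10_general n
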